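/- Suppose 𝒜 x = Φ 𝒫 x with Φ ≠ 1 and x = (u, p, p_c). Then G u = (1/(η(Φ-1))) S̄ (p + p_c) and p_c = -(1/η) ((1/η) S̄ + ζ⁻¹ Q)⁻¹ S̄ p, and substituting yields ℛ p = (1/Φ)(-(1/η) S̄ + (1/η²) S̄ ((1/η)S̄ + (1/ζ)Q)⁻¹ S̄ - kC) p, hence Φ = σ whenever p ≠ 0. -/

import Mathlib

/-!
Eliminating `u` from the first block row (`K` is invertible) expresses `G u` through
`S̄ (p + p_c)`; inserting this into the third row gives `((1/η) S̄ + ζ⁻¹ Q) p_c = -(1/η) S̄ p`,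
and inserting both into the second row gives `Φ ℛ p = N p` with `N = σ ℛ`. Writing
`A = (1/η) S̄` and `B = ζ⁻¹ Q`, the identity `A - A (A + B)⁻¹ A = (A⁻¹ + B⁻¹)⁻¹` shows that
`-N = (A⁻¹ + B⁻¹)⁻¹ + k C` is positive definite, so `N p ≠ 0` for `p ≠ 0` and `Φ / σ = 1`.
-/

open Matrix
open scoped ComplexOrder

namespace Matrix

variable {ι : Type*} [Fintype ι] [DecidableEq ι]

theorem inv_add_inv_mul_sub_mul_inv_add_mul {R : Type*} [CommRing R] {A B : Matrix ι ι R}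
    (hA : IsUnit A) (hB : IsUnit B) (hAB : IsUnit (A + B)) :
    (A⁻¹ + B⁻¹) * (A - A * (A + B)⁻¹ * A) = 1 := by
  have hAi : A⁻¹ * A = 1 := nonsing_inv_mul A ((isUnit_iff_isUnit_det A).1 hA)
  have hBi : B⁻¹ * B = 1 := nonsing_inv_mul B ((isUnit_iff_isUnit_det B).1 hB)
  have hABi : (A + B) * (A + B)⁻¹ = 1 := mul_nonsing_inv _ ((isUnit_iff_isUnit_det _).1 hAB)
  calc (A⁻¹ + B⁻¹) * (A - A * (A + B)⁻¹ * A)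
      = (A⁻¹ * A + B⁻¹ * A) * (1 - (A + B)⁻¹ * A) := by noncomm_ring
    _ = (B⁻¹ * B + B⁻¹ * A) * (1 - (A + B)⁻¹ * A) := by rw [hAi, hBi]
    _ = B⁻¹ * ((A + B) - (A + B) * (A + B)⁻¹ * A) := by noncomm_ring
    _ = 1 := by rw [hABi, Matrix.one_mul, add_sub_cancel_left, hBi]

theorem inv_add_inv_inv {R : Type*} [CommRing R] {A B : Matrix ι ι R}
    (hA : IsUnit A) (hB : IsUnit B) (hAB : IsUnit (A + B)) :
    (A⁻¹ + B⁻¹)⁻¹ = A - A * (A + B)⁻¹ * A :=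
  inv_eq_right_inv (inv_add_inv_mul_sub_mul_inv_add_mul hA hB hAB)

theorem PosDef.sub_mul_inv_add_mul {𝕜 : Type*} [RCLike 𝕜] {A B : Matrix ι ι 𝕜}
    (hA : A.PosDef) (hB : B.PosDef) : (A - A * (A + B)⁻¹ * A).PosDef := by
  rw [← inv_add_inv_inv hA.isUnit hB.isUnit (hA.add hB).isUnit]
  exact (hA.inv.add hB.inv).inv

end Matrix

theorem sub_one_smul_eq_of_eq_one_div_smul {V : Type*} [AddCommGroup V] [Module ℝ V] {η Φ : ℝ}
    {w v : V} (hΦ : Φ ≠ 1) (hw : w = (1 / (η * (Φ - 1))) • v) : (Φ - 1) • w = (1 / η) • v := by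
  rw [hw, smul_smul]
  congr 1
  field_simp [sub_ne_zero.2 hΦ]

section

variable {ι κ : Type*} [Fintype ι] [Fintype κ]

theorem eq_of_smul_inv_smul_mulVec_eq {N : Matrix ι ι ℝ} {Φ σ : ℝ} {v : ι → ℝ}
    (hv : N *ᵥ v ≠ 0) (h : Φ • ((σ⁻¹ • N) *ᵥ v) = N *ᵥ v) : Φ = σ := by
  rw [smul_mulVec, smul_smul] at h
  have hΦσ : Φ * σ⁻¹ = 1 := by
    by_contra hne
    refine hv (smul_right_injective _ (sub_ne_zero.2 hne) ?_)
    simp only [sub_smul, h, one_smul, sub_self, smul_zero]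
  have hσ : σ ≠ 0 := by rintro rfl; simp at hΦσ
  exact (mul_inv_eq_one₀ hσ).1 hΦσ

variable [DecidableEq κ]

theorem posDef_mul_inv_mul_transpose {K : Matrix κ κ ℝ} {G : Matrix ι κ ℝ} (hK : K.PosDef)
    (hG : ∀ p, Gᵀ *ᵥ p = 0 → p = 0) : (G * K⁻¹ * Gᵀ).PosDef := by
  have hinj : Function.Injective G.vecMul := fun a b (hab : a ᵥ* G = b ᵥ* G) =>
    sub_eq_zero.1 <| hG _ <| by rw [mulVec_sub, mulVec_transpose, mulVec_transpose, hab, sub_self]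
  simpa only [conjTranspose_eq_transpose_of_trivial] using hK.inv.mul_mul_conjTranspose_same hinj

theorem mulVec_eq_of_eigen_row₁ {K : Matrix κ κ ℝ} {G : Matrix ι κ ℝ} {η Φ : ℝ} {u : κ → ℝ}
    {p pc : ι → ℝ} (hK : IsUnit K) (hη : η ≠ 0) (hΦ : Φ ≠ 1)
    (h1 : η • (K *ᵥ u) + Gᵀ *ᵥ p + Gᵀ *ᵥ pc = Φ • (η • (K *ᵥ u))) :
    G *ᵥ u = (1 / (η * (Φ - 1))) • ((G * K⁻¹ * Gᵀ) *ᵥ (p + pc)) := by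
  have hGt : Gᵀ *ᵥ (p + pc) = (η * (Φ - 1)) • (K *ᵥ u) := by
    rw [mulVec_add]
    linear_combination (norm := module) h1
  rw [← mulVec_mulVec, ← mulVec_mulVec, hGt, mulVec_smul, mulVec_mulVec,
    nonsing_inv_mul K ((isUnit_iff_isUnit_det K).1 hK), one_mulVec, mulVec_smul, smul_smul,
    one_div_mul_cancel (mul_ne_zero hη (sub_ne_zero.2 hΦ)), one_smul]

variable [DecidableEq ι]

-- The matrix `σ ℛ`, called `N` above.
noncomputable def pressureSchur (S Q C : Matrix ι ι ℝ) (η ζ k : ℝ) : Matrix ι ι ℝ :=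
  -(1 / η) • S + (1 / η ^ 2) • (S * ((1 / η) • S + ζ⁻¹ • Q)⁻¹ * S) - k • C

theorem neg_pressureSchur_posDef {S Q C : Matrix ι ι ℝ} {η ζ k : ℝ} (hS : S.PosDef)
    (hQ : Q.PosDef) (hC : C.PosSemidef) (hη : 0 < η) (hζ : 0 < ζ) (hk : 0 ≤ k) :
    (-pressureSchur S Q C η ζ k).PosDef := by
  set A := (1 / η) • S
  have hAMA : A * (A + ζ⁻¹ • Q)⁻¹ * A =
      (1 / η ^ 2) • (S * ((1 / η) • S + ζ⁻¹ • Q)⁻¹ * S) := by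
    simp only [A, Matrix.smul_mul, Matrix.mul_smul, smul_smul]
    ring_nf
  have hN : -pressureSchur S Q C η ζ k = (A - A * (A + ζ⁻¹ • Q)⁻¹ * A) + k • C := by
    rw [pressureSchur, hAMA]
    module
  have hA : A.PosDef := hS.smul (one_div_pos.2 hη)
  rw [hN]
  exact (hA.sub_mul_inv_add_mul (hQ.smul (inv_pos.2 hζ))).add_posSemidef (hC.smul hk)

theorem eq_of_eigen_row₃ {S Q : Matrix ι ι ℝ} {η ζ Φ : ℝ} {w p pc : ι → ℝ} (hΦ : Φ ≠ 1)
    (hM : IsUnit ((1 / η) • S + ζ⁻¹ • Q)) (hw : (Φ - 1) • w = (1 / η) • (S *ᵥ (p + pc)))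
    (h3 : w - ζ⁻¹ • (Q *ᵥ pc) =
      Φ • (w + (-(1 / η) • S) *ᵥ p + (-((1 / η) • S + ζ⁻¹ • Q)) *ᵥ pc)) :
    pc = -(1 / η) • (((1 / η) • S + ζ⁻¹ • Q)⁻¹ *ᵥ (S *ᵥ p)) := by
  simp only [neg_mulVec, add_mulVec, smul_mulVec, mulVec_add] at h3 hw
  have hzero : (Φ - 1) • ((1 / η) • (S *ᵥ pc) + ζ⁻¹ • (Q *ᵥ pc) + (1 / η) • (S *ᵥ p)) = 0 := by
    linear_combination (norm := module) h3 + hw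
  have hMpc : ((1 / η) • S + ζ⁻¹ • Q) *ᵥ pc = -(1 / η) • (S *ᵥ p) := by
    rw [add_mulVec, smul_mulVec, smul_mulVec]
    linear_combination (norm := module) (smul_eq_zero.1 hzero).resolve_left (sub_ne_zero.2 hΦ)
  rw [← mulVec_smul, ← hMpc, mulVec_mulVec, nonsing_inv_mul _ ((isUnit_iff_isUnit_det _).1 hM),
    one_mulVec]

theorem smul_mulVec_eq_pressureSchur_of_eigen_row₂ {S Q C R : Matrix ι ι ℝ} {η ζ k Φ : ℝ}
    {w p pc : ι → ℝ} (hw : (Φ - 1) • w = (1 / η) • (S *ᵥ (p + pc)))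
    (hpc : pc = -(1 / η) • (((1 / η) • S + ζ⁻¹ • Q)⁻¹ *ᵥ (S *ᵥ p)))
    (h2 : w - k • (C *ᵥ p) = Φ • (w + R *ᵥ p)) :
    Φ • (R *ᵥ p) = pressureSchur S Q C η ζ k *ᵥ p := by
  have hSpc : S *ᵥ pc = -(1 / η) • ((S * ((1 / η) • S + ζ⁻¹ • Q)⁻¹ * S) *ᵥ p) := by
    rw [hpc, mulVec_smul, mulVec_mulVec, mulVec_mulVec]
  rw [mulVec_add] at hw
  rw [pressureSchur, sub_mulVec, add_mulVec, smul_mulVec, smul_mulVec, smul_mulVec]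
  linear_combination (norm := module) -h2 - hw - (1 / η) • hSpc

end

theorem stmt7_general {n m : ℕ} (K : Matrix (Fin n) (Fin n) ℝ) (G : Matrix (Fin m) (Fin n) ℝ)
    (Q C : Matrix (Fin m) (Fin m) ℝ) (η ζ k σ : ℝ)
    (hK : K.PosDef) (hG : ∀ p : Fin m → ℝ, Gᵀ *ᵥ p = 0 → p = 0)
    (hQ : Q.PosDef) (hC : C.PosSemidef)
    (hη : 0 < η) (hζ : 0 < ζ) (hk : 0 < k)
    (S R 𝒮 𝒯 : Matrix (Fin m) (Fin m) ℝ)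
    (hS : S = G * K⁻¹ * Gᵀ)
    (hR : R = -(1 / (σ * η)) • S
        + (1 / (σ * η ^ 2)) • (S * ((1 / η) • S + (1 / ζ) • Q)⁻¹ * S)
        - (k / σ) • C)
    (h𝒮 : 𝒮 = -((1 / η) • S + ζ⁻¹ • Q))
    (h𝒯 : 𝒯 = -(1 / η) • S)
    (Φ : ℝ) (hΦ : Φ ≠ 1) (u : Fin n → ℝ) (p pc : Fin m → ℝ)
    (h1 : η • (K *ᵥ u) + Gᵀ *ᵥ p + Gᵀ *ᵥ pc = Φ • (η • (K *ᵥ u)))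
    (h2 : G *ᵥ u - k • (C *ᵥ p) = Φ • (G *ᵥ u + R *ᵥ p))
    (h3 : G *ᵥ u - ζ⁻¹ • (Q *ᵥ pc) = Φ • (G *ᵥ u + 𝒯 *ᵥ p + 𝒮 *ᵥ pc)) :
    G *ᵥ u = (1 / (η * (Φ - 1))) • (S *ᵥ (p + pc)) ∧
    pc = -(1 / η) • (((1 / η) • S + ζ⁻¹ • Q)⁻¹ *ᵥ (S *ᵥ p)) ∧
    R *ᵥ p = Φ⁻¹ • ((-(1 / η) • S
        + (1 / η ^ 2) • (S * ((1 / η) • S + (1 / ζ) • Q)⁻¹ * S)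
        - k • C) *ᵥ p) ∧
    (p ≠ 0 → Φ = σ) := by
  rw [one_div ζ] at hR ⊢
  have hSpd : S.PosDef := hS ▸ posDef_mul_inv_mul_transpose hK hG
  have hM : IsUnit ((1 / η) • S + ζ⁻¹ • Q) :=
    ((hSpd.smul (one_div_pos.2 hη)).add (hQ.smul (inv_pos.2 hζ))).isUnit
  have hGu := hS ▸ mulVec_eq_of_eigen_row₁ hK.isUnit hη.ne' hΦ h1
  have hw := sub_one_smul_eq_of_eq_one_div_smul hΦ hGu
  have hpc := eq_of_eigen_row₃ hΦ hM hw (h𝒯 ▸ h𝒮 ▸ h3)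
  have hΦR := smul_mulVec_eq_pressureSchur_of_eigen_row₂ hw hpc h2
  have hRN : R = σ⁻¹ • pressureSchur S Q C η ζ k := by
    rw [hR, pressureSchur]
    module
  have hN := neg_pressureSchur_posDef hSpd hQ hC hη hζ hk.le
  have hNp : p ≠ 0 → pressureSchur S Q C η ζ k *ᵥ p ≠ 0 := fun hp hNp => by
    simpa [neg_mulVec, hNp] using hN.dotProduct_mulVec_pos hp
  refine ⟨hGu, hpc, ?_, fun hp => eq_of_smul_inv_smul_mulVec_eq (hNp hp) (hRN ▸ hΦR)⟩
  change R *ᵥ p = Φ⁻¹ • (pressureSchur S Q C η ζ k *ᵥ p)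
  rcases eq_or_ne Φ 0 with rfl | hΦ0
  · rw [zero_smul, eq_comm] at hΦR
    rw [hRN, smul_mulVec, hΦR, smul_zero, smul_zero]
  · exact (eq_inv_smul_iff₀ hΦ0).2 hΦR

theorem stmt7 {n m : ℕ} (K : Matrix (Fin n) (Fin n) ℝ) (G : Matrix (Fin m) (Fin n) ℝ)
    (Q C : Matrix (Fin m) (Fin m) ℝ) (η ζ k σ : ℝ)
    (hK : K.PosDef) (hG : ∀ p : Fin m → ℝ, Gᵀ *ᵥ p = 0 → p = 0)
    (hQ : Q.PosDef) (hC : C.PosSemidef)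
    (hη : 0 < η) (hζ : 0 < ζ) (hk : 0 < k)
    (hσ : σ < 0 ∨ (0 < σ ∧ σ < 1))
    (S R 𝒮 𝒯 : Matrix (Fin m) (Fin m) ℝ)
    (hS : S = G * K⁻¹ * Gᵀ)
    (hR : R = -(1 / (σ * η)) • S
        + (1 / (σ * η ^ 2)) • (S * ((1 / η) • S + (1 / ζ) • Q)⁻¹ * S)
        - (k / σ) • C)
    (h𝒮 : 𝒮 = -((1 / η) • S + ζ⁻¹ • Q))
    (h𝒯 : 𝒯 = -(1 / η) • S)
    (Φ : ℝ) (hΦ : Φ ≠ 1) (u : Fin n → ℝ) (p pc : Fin m → ℝ)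
    (h1 : η • (K *ᵥ u) + Gᵀ *ᵥ p + Gᵀ *ᵥ pc = Φ • (η • (K *ᵥ u)))
    (h2 : G *ᵥ u - k • (C *ᵥ p) = Φ • (G *ᵥ u + R *ᵥ p))
    (h3 : G *ᵥ u - ζ⁻¹ • (Q *ᵥ pc) = Φ • (G *ᵥ u + 𝒯 *ᵥ p + 𝒮 *ᵥ pc)) :
    G *ᵥ u = (1 / (η * (Φ - 1))) • (S *ᵥ (p + pc)) ∧
    pc = -(1 / η) • (((1 / η) • S + ζ⁻¹ • Q)⁻¹ *ᵥ (S *ᵥ p)) ∧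
    R *ᵥ p = Φ⁻¹ • ((-(1 / η) • S
        + (1 / η ^ 2) • (S * ((1 / η) • S + (1 / ζ) • Q)⁻¹ * S)
        - k • C) *ᵥ p) ∧
    (p ≠ 0 → Φ = σ) :=
  stmt7_general K G Q C η ζ k σ hK hG hQ hC hη hζ hk S R 𝒮 𝒯 hS hR h𝒮 h𝒯 Φ hΦ u p pc h1 h2 h3
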